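/- Let K be a field and let a weighted graph be the join of weighted graphs T₁,…,T_k with marked vertices v₁,…,v_k: vertex set {0} ⊔ V₁ ⊔ … ⊔ V_k (ordered with 0 first), vertices in different V_i, V_j not joined, and vertex 0 joined to each v_j by an edge of weight 1 and to no other vertex. Let T(t) denote the Coxeter polynomial of the join, T_j(t) that of T_j, and T̄_j(t) that of T_j with vertex v_j deleted. Then for all nonzero x, y ∈ K: T(x)·∏_j T_j(y) − T(y)·∏_j T_j(x) = (x + x⁻¹ − y − y⁻¹)·∏_j T_j(x)·T_j(y) + Σ_{j=1}^k (T_j(x)·T̄_j(y) − T_j(y)·T̄_j(x))·∏_{i ≠ j} T_i(x)·T_i(y). -/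

import Mathlib

/-!
Cauchy's expansion of a bordered determinant along the row and column of the new vertex `0`
gives `T(t) = (t + t⁻¹) ∏ T_j(t) - Σ_j (-t)(-t⁻¹) T̄_j(t) ∏_{i ≠ j} T_i(t)`: the border entries
sit only at the marked vertices `v_j`, and replacing the column of `v_j` in the block-diagonal
matrix of the `T_j` keeps it block triangular, so only the entry of the new column in block `j`
matters.  Since `(-t)(-t⁻¹) = 1`, substituting this
expansion for `t = x` and `t = y` leaves a polynomial identity in the `T_j` and `T̄_j`.
-/

open Matrix Finset

namespace Matrix

variable {R : Type*} [CommRing R]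

theorem det_updateRow_finsetSum {n : Type*} [DecidableEq n] [Fintype n] (A : Matrix n n R)
    (i : n) {ι : Type*} (s : Finset ι) (u : ι → n → R) :
    (A.updateRow i (∑ c ∈ s, u c)).det = ∑ c ∈ s, (A.updateRow i (u c)).det :=
  (detRowAlternating : (n → R) [⋀^n]→ₗ[R] R).toMultilinearMap.map_update_sum s i u A

section Option

variable {ι : Type*} [Fintype ι] [DecidableEq ι]

theorem det_of_apply_none_some_eq_zero (A : Matrix (Option ι) (Option ι) R)
    (h : ∀ c, A none (some c) = 0) : A.det = A none none * (A.submatrix some some).det := by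
  let e : ι ⊕ Unit ≃ Option ι := (Equiv.optionEquivSumPUnit ι).symm
  have hblocks : A.submatrix e e = fromBlocks (A.submatrix some some)
      (of fun r _ => A (some r) none) 0 (of fun _ _ : Unit => A none none) := by
    ext (r | _) (c | _) <;> simp [e, h]
  rw [← det_submatrix_equiv_self e, hblocks,
    det_fromBlocks_zero₂₁, det_unique (of fun _ _ : Unit => A none none), mul_comm]
  rfl

theorem det_updateRow_none_single_some (A : Matrix (Option ι) (Option ι) R) (c : ι) (a : R) :
    (A.updateRow none (Pi.single (some c) a)).det =
      -(a * ((A.submatrix some some).updateCol c fun r => A (some r) none).det) := by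
  set N := A.updateRow none (Pi.single (some c) a)
  set σ := Equiv.swap none (some c)
  have hsign : (N.submatrix id σ).det = -N.det := by
    rw [det_permute', Equiv.Perm.sign_swap (Option.some_ne_none c).symm]
    simp
  have hrow : ∀ c', N.submatrix id σ none (some c') = 0 := by
    intro c'
    by_cases hc : c' = c
    · subst hc; simp [N, σ]
    · simp [N, σ, Equiv.swap_apply_of_ne_of_ne, hc]
  have hcorner : N.submatrix id σ none none = a := by simp [N, σ]
  have hsub : (N.submatrix id σ).submatrix some some
      = (A.submatrix some some).updateCol c fun r => A (some r) none := by
    ext r c'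
    by_cases hc : c' = c
    · subst hc; simp [N, σ]
    · simp [N, σ, Equiv.swap_apply_of_ne_of_ne, hc]
  rw [← neg_neg N.det, ← hsign, det_of_apply_none_some_eq_zero _ hrow, hcorner, hsub]

theorem det_option_eq_sub_sum_det_updateCol (A : Matrix (Option ι) (Option ι) R) :
    A.det = A none none * (A.submatrix some some).det - ∑ c,
      A none (some c) * ((A.submatrix some some).updateCol c fun r => A (some r) none).det := by
  have hrow :
      A none = Pi.single none (A none none) + ∑ c, Pi.single (some c) (A none (some c)) := by
    ext (_ | c) <;> simp [Pi.single_apply]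
  have hfirst : (A.updateRow none (Pi.single none (A none none))).det =
      A none none * (A.submatrix some some).det := by
    rw [det_of_apply_none_some_eq_zero _ (by simp)]
    congr 2
  conv_lhs => rw [← updateRow_eq_self A none, hrow]
  rw [det_updateRow_add, det_updateRow_finsetSum, hfirst, sub_eq_add_neg, ← sum_neg_distrib]
  simp only [det_updateRow_none_single_some]

end Option

section BlockDiagonal

variable {o : Type*} [DecidableEq o] {β : o → Type*}

theorem eq_blockDiagonal'_of (A : Matrix (Σ l, β l) (Σ l, β l) R)
    (B : ∀ l, Matrix (β l) (β l) R)
    (hdiag : ∀ l x y, A ⟨l, x⟩ ⟨l, y⟩ = B l x y)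
    (hoff : ∀ l l' x y, l ≠ l' → A ⟨l, x⟩ ⟨l', y⟩ = 0) :
    A = blockDiagonal' B := by
  ext ⟨l, x⟩ ⟨l', y⟩
  obtain rfl | hl := eq_or_ne l l'
  · rw [hdiag, blockDiagonal'_apply_eq]
  · rw [hoff _ _ _ _ hl, blockDiagonal'_apply_ne _ _ _ hl]

variable [Fintype o] [∀ l, Fintype (β l)] [∀ l, DecidableEq (β l)]

theorem det_blockDiagonal' (B : ∀ l, Matrix (β l) (β l) R) :
    (blockDiagonal' B).det = ∏ l, (B l).det := by
  let : LinearOrder o := LinearOrder.lift' _ (Fintype.equivFin o).injective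
  have htri : (blockDiagonal' B).BlockTriangular Sigma.fst := fun r c h =>
    blockDiagonal'_apply_ne _ _ _ h.ne'
  rw [htri.det, ← prod_subset (subset_univ _) fun l _ hl => ?_]
  · refine prod_congr rfl fun l _ => ?_
    rw [← det_submatrix_equiv_self (Equiv.sigmaSubtype l).symm]
    congr 1
    ext x y
    exact blockDiagonal'_apply_eq B l x y
  · have : IsEmpty (β l) := ⟨fun x => hl (mem_image_of_mem Sigma.fst (mem_univ ⟨l, x⟩))⟩
    exact det_isEmpty

theorem det_blockDiagonal'_updateCol (B : ∀ l, Matrix (β l) (β l) R) (j : o) (a : β j)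
    (w : (Σ l, β l) → R) :
    ((blockDiagonal' B).updateCol ⟨j, a⟩ w).det =
      ((B j).updateCol a fun x => w ⟨j, x⟩).det * ∏ l ∈ univ.erase j, (B l).det := by
  set N := (blockDiagonal' B).updateCol ⟨j, a⟩ w
  set N' := blockDiagonal' (Function.update B j ((B j).updateCol a fun x => w ⟨j, x⟩))
  have hN' :
      N'.det = ((B j).updateCol a fun x => w ⟨j, x⟩).det * ∏ l ∈ univ.erase j, (B l).det := by
    rw [det_blockDiagonal', ← sdiff_singleton_eq_erase, ← prod_update_of_mem (mem_univ j)]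
    refine prod_congr rfl fun l _ => ?_
    obtain rfl | hl := eq_or_ne l j
    · simp
    · simp [hl]
  have hNtri : ∀ r : Σ l, β l, ¬r.1 ≠ j → ∀ c : Σ l, β l, c.1 ≠ j → N r c = 0 := by
    rintro ⟨l, x⟩ hl ⟨l', y⟩ hl'
    have hc : (⟨l', y⟩ : Σ l, β l) ≠ ⟨j, a⟩ := fun h => hl' (congrArg Sigma.fst h)
    simp only [N, updateCol_ne hc]
    exact blockDiagonal'_apply_ne _ _ _ (by rintro rfl; exact hl hl')
  have hN'tri : ∀ r : Σ l, β l, ¬r.1 ≠ j → ∀ c : Σ l, β l, c.1 ≠ j → N' r c = 0 := by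
    rintro ⟨l, x⟩ hl ⟨l', y⟩ hl'
    exact blockDiagonal'_apply_ne _ _ _ (by rintro rfl; exact hl hl')
  have hagree : ∀ r c : Σ l, β l, (r.1 ≠ j ↔ c.1 ≠ j) → N r c = N' r c := by
    rintro ⟨l, x⟩ ⟨l', y⟩ h
    obtain rfl | hll' := eq_or_ne l l'
    · obtain rfl | hl := eq_or_ne l j
      · simp [N, N', updateCol_apply]
      · simp [N, N', hl]
    · have hl' : l' ≠ j := by rintro rfl; exact h.not.mpr (not_not.mpr rfl) hll'
      simp [N, N', blockDiagonal'_apply_ne _ _ _ hll', hl']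
  rw [← hN', twoBlockTriangular_det N _ hNtri, twoBlockTriangular_det N' _ hN'tri]
  congr 2 <;> ext r c
  · exact hagree r c (iff_of_true r.2 c.2)
  · exact hagree r c (iff_of_false r.2 c.2)

end BlockDiagonal

theorem det_updateCol_single_self {n : ℕ} (A : Matrix (Fin (n + 1)) (Fin (n + 1)) R)
    (i : Fin (n + 1)) :
    (A.updateCol i (Pi.single i 1)).det = (A.submatrix i.succAbove i.succAbove).det := by
  rw [← cramer_apply, cramer_eq_adjugate_mulVec, mulVec_single_one, col_apply,
    adjugate_fin_succ_eq_det_submatrix, Even.neg_one_pow ⟨i, rfl⟩, one_mul]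

theorem det_option_blockDiagonal' {o : Type*} [Fintype o] [DecidableEq o] {m : o → ℕ}
    (A : Matrix (Option (Σ l, Fin (m l + 1))) (Option (Σ l, Fin (m l + 1))) R)
    (B : ∀ l, Matrix (Fin (m l + 1)) (Fin (m l + 1)) R) (v : ∀ l, Fin (m l + 1)) (u w : o → R)
    (hrow : ∀ l x, A none (some ⟨l, x⟩) = if x = v l then u l else 0)
    (hcol : ∀ l x, A (some ⟨l, x⟩) none = if x = v l then w l else 0)
    (hblock : A.submatrix some some = blockDiagonal' B) :
    A.det = A none none * ∏ l, (B l).det -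
      ∑ l, u l * w l * ((B l).submatrix (v l).succAbove (v l).succAbove).det *
        ∏ i ∈ univ.erase l, (B i).det := by
  rw [det_option_eq_sub_sum_det_updateCol, hblock, det_blockDiagonal', Fintype.sum_sigma]
  congr 1
  refine sum_congr rfl fun l _ => ?_
  have hcol_l : (fun x => A (some ⟨l, x⟩) none) = w l • Pi.single (v l) 1 := by
    ext x
    simp [hcol, Pi.single_apply]
  simp only [hrow, ite_mul, zero_mul, sum_ite_eq', mem_univ, if_true, det_blockDiagonal'_updateCol,
    hcol_l, det_updateCol_smul, det_updateCol_single_self]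
  ring

end Matrix

section CrossDifference

variable {R ι : Type*} [CommRing R] [Fintype ι] [DecidableEq ι]

theorem sum_mul_prod_erase_mul_prod (r p q : ι → R) :
    (∑ j, r j * ∏ i ∈ univ.erase j, p i) * ∏ i, q i =
      ∑ j, q j * r j * ∏ i ∈ univ.erase j, (p i * q i) := by
  rw [sum_mul]
  refine sum_congr rfl fun j _ => ?_
  rw [prod_mul_distrib, ← mul_prod_erase univ q (mem_univ j)]
  ring

theorem mul_prod_sub_sum_mul_prod_erase_cross (X Y : R) (p q r s : ι → R) :
    (X * ∏ i, p i - ∑ j, r j * ∏ i ∈ univ.erase j, p i) * ∏ i, q i -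
        (Y * ∏ i, q i - ∑ j, s j * ∏ i ∈ univ.erase j, q i) * ∏ i, p i =
      (X - Y) * ∏ i, (p i * q i) +
        ∑ j, (p j * s j - q j * r j) * ∏ i ∈ univ.erase j, (p i * q i) := by
  simp only [sub_mul, sum_mul_prod_erase_mul_prod, mul_comm (q _) (p _), sum_sub_distrib,
    prod_mul_distrib]
  ring

end CrossDifference

/-- The join of `T₁, …, T_k` lives on `Option (Σ j, Fin (m j + 1))`, the new vertex `none`
coming first; `Mb t j` and `M t` play the roles of `t • S + t⁻¹ • Sᵀ` for `T_j` and for the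
join, and `T̄_j(t)` is the minor of `Mb t j` at `v j`. -/
theorem coxeter_join_christoffel_darboux_general {K : Type*} [Field K]
    (k : ℕ) (m : Fin k → ℕ)
    (v : ∀ j, Fin (m j + 1))
    (Mb : K → ∀ j, Matrix (Fin (m j + 1)) (Fin (m j + 1)) K)
    (M : K → Matrix (Option (Σ j, Fin (m j + 1))) (Option (Σ j, Fin (m j + 1))) K)
    (hM00 : ∀ t, M t none none = t + t⁻¹)
    (hM0j : ∀ t j x, M t none (some ⟨j, x⟩) = if x = v j then -t else 0)
    (hMj0 : ∀ t j x, M t (some ⟨j, x⟩) none = if x = v j then -t⁻¹ else 0)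
    (hMdiag : ∀ t j x y, M t (some ⟨j, x⟩) (some ⟨j, y⟩) = Mb t j x y)
    (hMoff : ∀ t j j' x y, j ≠ j' → M t (some ⟨j, x⟩) (some ⟨j', y⟩) = 0)
    (x y : K) (hx : x ≠ 0) (hy : y ≠ 0) :
    (M x).det * ∏ j, (Mb y j).det - (M y).det * ∏ j, (Mb x j).det
      = (x + x⁻¹ - y - y⁻¹) * ∏ j, ((Mb x j).det * (Mb y j).det)
        + ∑ j,
            ((Mb x j).det *
                ((Mb y j).submatrix (v j).succAbove (v j).succAbove).det
              - (Mb y j).det *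
                ((Mb x j).submatrix (v j).succAbove (v j).succAbove).det) *
              ∏ i ∈ Finset.univ.erase j, ((Mb x i).det * (Mb y i).det) := by
  have hexpand : ∀ t : K, t ≠ 0 → (M t).det = (t + t⁻¹) * ∏ j, (Mb t j).det -
      ∑ j, ((Mb t j).submatrix (v j).succAbove (v j).succAbove).det *
        ∏ i ∈ univ.erase j, (Mb t i).det := by
    intro t ht
    rw [det_option_blockDiagonal' (M t) (Mb t) v (fun _ => -t) (fun _ => -t⁻¹) (hM0j t) (hMj0 t)
      (eq_blockDiagonal'_of _ _ (hMdiag t) (hMoff t)), hM00]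
    simp only [neg_mul_neg, mul_inv_cancel₀ ht, one_mul]
  rw [hexpand x hx, hexpand y hy, mul_prod_sub_sum_mul_prod_erase_cross]
  ring

/-- The join case of the Christoffel–Darboux identity of Proposition 1, multiplied
through by `(x - y)`.  The join of weighted graphs `T₁, …, T_k` (the `j`-th on
`Fin (m j + 1)` with symmetric weights `a j`, Seifert matrix `Sb j` and marked vertex
`v j`) has vertex set `Option (Σ j, Fin (m j + 1))` with the extra vertex `none`
first, joined to each `v j` by an edge of weight `1`.  `Mb t j = t • Sb j + t⁻¹ • (Sb j)ᵀ`
and `M t` is the corresponding matrix of the join, so `T(t) = det (M t)`,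
`T_j(t) = det (Mb t j)` and `T̄_j(t)` is the determinant of `Mb t j` with the row and
column of `v j` deleted. -/
theorem coxeter_join_christoffel_darboux {K : Type*} [Field K]
    (k : ℕ) (m : Fin k → ℕ)
    (a : ∀ j, Fin (m j + 1) → Fin (m j + 1) → K)
    (hsym : ∀ j x y, a j x y = a j y x)
    (v : ∀ j, Fin (m j + 1))
    (Sb : ∀ j, Matrix (Fin (m j + 1)) (Fin (m j + 1)) K)
    (hSb : ∀ j x y, Sb j x y = if x = y then 1 else if x < y then -a j x y else 0)
    (Mb : K → ∀ j, Matrix (Fin (m j + 1)) (Fin (m j + 1)) K)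
    (hMb : ∀ t j, Mb t j = t • Sb j + t⁻¹ • (Sb j)ᵀ)
    (M : K → Matrix (Option (Σ j, Fin (m j + 1))) (Option (Σ j, Fin (m j + 1))) K)
    (hM00 : ∀ t, M t none none = t + t⁻¹)
    (hM0j : ∀ t j x, M t none (some ⟨j, x⟩) = if x = v j then -t else 0)
    (hMj0 : ∀ t j x, M t (some ⟨j, x⟩) none = if x = v j then -t⁻¹ else 0)
    (hMdiag : ∀ t j x y, M t (some ⟨j, x⟩) (some ⟨j, y⟩) = Mb t j x y)
    (hMoff : ∀ t j j' x y, j ≠ j' → M t (some ⟨j, x⟩) (some ⟨j', y⟩) = 0)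
    (x y : K) (hx : x ≠ 0) (hy : y ≠ 0) :
    (M x).det * ∏ j, (Mb y j).det - (M y).det * ∏ j, (Mb x j).det
      = (x + x⁻¹ - y - y⁻¹) * ∏ j, ((Mb x j).det * (Mb y j).det)
        + ∑ j,
            ((Mb x j).det *
                ((Mb y j).submatrix (v j).succAbove (v j).succAbove).det
              - (Mb y j).det *
                ((Mb x j).submatrix (v j).succAbove (v j).succAbove).det) *
              ∏ i ∈ Finset.univ.erase j, ((Mb x i).det * (Mb y i).det) :=
  coxeter_join_christoffel_darboux_general k m v Mb M hM00 hM0j hMj0 hMdiag hMoff x y hx hy
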